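/- Let G be a discrete abelian group, 𝒜 ∈ B_LTI(ℓ²(G)^N) with transfer matrix Â, and set A_bnd ∈ M_N(ℝ) to be the matrix with entries ‖â_{m,n}‖_{L^∞(Ĝ)}. Then ‖𝒜‖ ≤ ‖A_bnd‖₂, the spectral norm of A_bnd. -/

import Mathlib

/-! Plancherel turns `‖𝒜 x‖²` into `∫ ∑ₘ |(Λ(ξ) x̂(ξ))ₘ|² dμ`. For almost every `ξ` the entries of
`Λ(ξ)` are dominated by those of `A_bnd`, so `|Λ(ξ) w| ≤ A_bnd |w|` entrywise and hence
`‖Λ(ξ) w‖ ≤ ‖A_bnd‖₂ ‖w‖`; integrating this gives `‖𝒜 x‖ ≤ ‖A_bnd‖₂ ‖x‖`. -/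

open MeasureTheory Complex
open scoped ENNReal ComplexOrder

set_option maxHeartbeats 1000000
set_option synthInstance.maxHeartbeats 400000

noncomputable section

/-- Discrete convolution of two complex-valued functions on a discrete abelian group `G`:
`(x ∗ y)(h) = ∑_{g ∈ G} x(g) y(h - g)`. -/
def conv {G : Type*} [AddCommGroup G] (x y : G → ℂ) : G → ℂ :=
  fun h => ∑' g, x g * y (h - g)

/-- `ℓ²(G)` with complex values. -/
abbrev ell2 (G : Type*) [AddCommGroup G] : Type _ := lp (fun _ : G => ℂ) 2

theorem memℓp_translate {G : Type*} [AddCommGroup G] (g : G) (x : ell2 G) :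
    Memℓp (fun h => (x : G → ℂ) (h - g)) 2 := by
  have hx : Summable (fun h : G => ‖(x : G → ℂ) h‖ ^ (2 : ℝ≥0∞).toReal) :=
    Memℓp.summable (by simp) (lp.memℓp x)
  have h2 : Summable (fun h : G => ‖(x : G → ℂ) (h - g)‖ ^ (2 : ℝ≥0∞).toReal) :=
    (Equiv.subRight g).summable_iff.mpr hx
  exact memℓp_gen h2

/-- The translation operator `T_g` on `ℓ²(G)`: `(T_g x)(h) = x(h - g)`. -/
def translLp {G : Type*} [AddCommGroup G] (g : G) (x : ell2 G) : ell2 G :=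
  ⟨fun h => (x : G → ℂ) (h - g), memℓp_translate g x⟩

/-- Spectral norm (ℓ²-operator norm) of a real square matrix. -/
def specNormR {N : ℕ} (A : Matrix (Fin N) (Fin N) ℝ) : ℝ :=
  ‖Matrix.toEuclideanCLM (𝕜 := ℝ) A‖

instance piLp_completeSpace {ι : Type*} (p : ENNReal) (α : ι → Type*)
    [∀ i, UniformSpace (α i)] [∀ i, CompleteSpace (α i)] : CompleteSpace (PiLp p α) :=
  PiLp.completeSpace p α
/-- A bounded operator on `ℓ²(G)^N` (with values in `ℓ²(G)^M`) commutes with all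
translations. -/
def LTI {G : Type*} [AddCommGroup G] {N M : ℕ}
    (T : PiLp 2 (fun _ : Fin N => ell2 G) →L[ℂ] PiLp 2 (fun _ : Fin M => ell2 G)) : Prop :=
  ∀ (g : G) (x : PiLp 2 (fun _ : Fin N => ell2 G)),
    T ((WithLp.equiv 2 _).symm fun n => translLp g (x n)) =
      (WithLp.equiv 2 _).symm fun m => translLp g (T x m)

/-- `Λ` is the transfer matrix of `T`: each entry of `Λ` is essentially bounded and
`F(T x) = Λ ⬝ x̂` a.e. for every `x`. -/
def IsTransfer {G : Type*} [AddCommGroup G]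
    {Gd : Type*} [MeasurableSpace Gd] (μ : Measure Gd)
    (F : lp (fun _ : G => ℂ) 2 ≃ₗᵢ[ℂ] Lp ℂ 2 μ) {N M : ℕ}
    (T : PiLp 2 (fun _ : Fin N => ell2 G) →L[ℂ] PiLp 2 (fun _ : Fin M => ell2 G))
    (Λ : Gd → Matrix (Fin M) (Fin N) ℂ) : Prop :=
  (∀ m n, MeasureTheory.MemLp (fun ξ => Λ ξ m n) ∞ μ) ∧
    ∀ (x : PiLp 2 (fun _ : Fin N => ell2 G)) (m : Fin M),
      (F (T x m) : Gd → ℂ) =ᵐ[μ] fun ξ => ∑ n, Λ ξ m n * (F (x n) : Gd → ℂ) ξ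

open Matrix Finset

theorem Matrix.sum_norm_mulVec_sq_le_of_norm_le {n : Type*} [Fintype n] [DecidableEq n]
    (B : Matrix n n ℝ) (Λ : Matrix n n ℂ) (hΛ : ∀ i j, ‖Λ i j‖ ≤ B i j) (w : n → ℂ) :
    ∑ i, ‖(Λ *ᵥ w) i‖ ^ 2 ≤ ‖toEuclideanCLM (𝕜 := ℝ) B‖ ^ 2 * ∑ j, ‖w j‖ ^ 2 := by
  set v : EuclideanSpace ℝ n := WithLp.toLp 2 fun j => ‖w j‖
  have hentry : ∀ i, ‖(Λ *ᵥ w) i‖ ≤ (B *ᵥ fun j => ‖w j‖) i := fun i =>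
    calc ‖(Λ *ᵥ w) i‖ ≤ ∑ j, ‖Λ i j * w j‖ := norm_sum_le _ _
      _ ≤ ∑ j, B i j * ‖w j‖ := sum_le_sum fun j _ => by
            rw [norm_mul]; exact mul_le_mul_of_nonneg_right (hΛ i j) (norm_nonneg _)
  calc ∑ i, ‖(Λ *ᵥ w) i‖ ^ 2 ≤ ∑ i, ((B *ᵥ fun j => ‖w j‖) i) ^ 2 :=
        sum_le_sum fun i _ => pow_le_pow_left₀ (norm_nonneg _) (hentry i) 2
    _ = ‖toEuclideanCLM (𝕜 := ℝ) B v‖ ^ 2 := by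
        simp [v, EuclideanSpace.norm_sq_eq, Matrix.toEuclideanCLM_toLp]
    _ ≤ (‖toEuclideanCLM (𝕜 := ℝ) B‖ * ‖v‖) ^ 2 :=
        pow_le_pow_left₀ (norm_nonneg _) ((toEuclideanCLM (𝕜 := ℝ) B).le_opNorm v) 2
    _ = ‖toEuclideanCLM (𝕜 := ℝ) B‖ ^ 2 * ∑ j, ‖w j‖ ^ 2 := by
        simp [v, mul_pow, EuclideanSpace.norm_sq_eq]

theorem MeasureTheory.Lp.ofReal_norm_sq_eq_lintegral {α E : Type*} [MeasurableSpace α]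
    {μ : Measure α} [NormedAddCommGroup E] (f : Lp E 2 μ) :
    ENNReal.ofReal (‖f‖ ^ 2) = ∫⁻ a, ENNReal.ofReal (‖f a‖ ^ 2) ∂μ := by
  have h := eLpNorm_nnreal_pow_eq_lintegral (f := (f : α → E)) (μ := μ) (p := 2) two_ne_zero
  simp only [ENNReal.coe_ofNat, NNReal.coe_ofNat, ENNReal.rpow_ofNat] at h
  rw [Lp.norm_def, ENNReal.ofReal_pow ENNReal.toReal_nonneg,
    ENNReal.ofReal_toReal (Lp.eLpNorm_ne_top f), h]
  simp_rw [ENNReal.ofReal_pow (norm_nonneg _), ofReal_norm]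

theorem MeasureTheory.MemLp.ae_norm_le_toReal_eLpNorm_top {α E : Type*} [MeasurableSpace α]
    {μ : Measure α} [NormedAddCommGroup E] {f : α → E} (hf : MemLp f ∞ μ) :
    ∀ᵐ a ∂μ, ‖f a‖ ≤ (eLpNorm f ∞ μ).toReal := by
  rw [toReal_eLpNorm hf.aestronglyMeasurable]
  exact ae_le_lpNorm_exponent_top hf

theorem MeasureTheory.Lp.ofReal_sum_norm_sq_eq_lintegral {ι α E : Type*} [Fintype ι]
    [MeasurableSpace α] {μ : Measure α} [NormedAddCommGroup E] (f : ι → Lp E 2 μ) :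
    ENNReal.ofReal (∑ i, ‖f i‖ ^ 2) = ∫⁻ a, ENNReal.ofReal (∑ i, ‖f i a‖ ^ 2) ∂μ := by
  have hmeas : ∀ i, AEMeasurable (fun a => ENNReal.ofReal (‖f i a‖ ^ 2)) μ := fun i =>
    ((Lp.aestronglyMeasurable (f i)).norm.aemeasurable.pow_const 2).ennreal_ofReal
  simp_rw [ENNReal.ofReal_sum_of_nonneg fun i _ => sq_nonneg _, Lp.ofReal_norm_sq_eq_lintegral]
  exact (lintegral_finsetSum' _ fun i _ => hmeas i).symm

theorem IsTransfer.opNorm_le_of_ae_norm_le {G : Type*} [AddCommGroup G]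
    {Gd : Type*} [MeasurableSpace Gd] {μ : Measure Gd}
    {F : lp (fun _ : G => ℂ) 2 ≃ₗᵢ[ℂ] Lp ℂ 2 μ} {N : ℕ}
    {T : PiLp 2 (fun _ : Fin N => ell2 G) →L[ℂ] PiLp 2 (fun _ : Fin N => ell2 G)}
    {Λ : Gd → Matrix (Fin N) (Fin N) ℂ} (hΛ : IsTransfer μ F T Λ)
    {B : Matrix (Fin N) (Fin N) ℝ} (hB : ∀ᵐ ξ ∂μ, ∀ m n, ‖Λ ξ m n‖ ≤ B m n) :
    ‖T‖ ≤ ‖toEuclideanCLM (𝕜 := ℝ) B‖ := by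
  set C := ‖toEuclideanCLM (𝕜 := ℝ) B‖
  refine T.opNorm_le_bound (norm_nonneg _) fun x => ?_
  have hnorm : ∀ y : PiLp 2 (fun _ : Fin N => ell2 G),
      ENNReal.ofReal (‖y‖ ^ 2) = ∫⁻ ξ, ENNReal.ofReal (∑ n, ‖F (y n) ξ‖ ^ 2) ∂μ := fun y => by
    simp_rw [PiLp.norm_sq_eq_of_L2, ← F.norm_map]
    exact Lp.ofReal_sum_norm_sq_eq_lintegral fun n => F (y n)
  have hpointwise : ∀ᵐ ξ ∂μ, ∑ m, ‖F (T x m) ξ‖ ^ 2 ≤ C ^ 2 * ∑ n, ‖F (x n) ξ‖ ^ 2 := by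
    filter_upwards [hB, ae_all_iff.mpr (hΛ.2 x)] with ξ hBξ hTξ
    simp_rw [hTξ]
    exact sum_norm_mulVec_sq_le_of_norm_le B (Λ ξ) hBξ fun n => F (x n) ξ
  have hsq : ENNReal.ofReal (‖T x‖ ^ 2) ≤ ENNReal.ofReal ((C * ‖x‖) ^ 2) :=
    calc ENNReal.ofReal (‖T x‖ ^ 2)
        = ∫⁻ ξ, ENNReal.ofReal (∑ m, ‖F (T x m) ξ‖ ^ 2) ∂μ := hnorm (T x)
      _ ≤ ∫⁻ ξ, ENNReal.ofReal (C ^ 2) * ENNReal.ofReal (∑ n, ‖F (x n) ξ‖ ^ 2) ∂μ :=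
          lintegral_mono_ae <| hpointwise.mono fun ξ hξ => by
            rw [← ENNReal.ofReal_mul (sq_nonneg C)]
            exact ENNReal.ofReal_le_ofReal hξ
      _ = ENNReal.ofReal ((C * ‖x‖) ^ 2) := by
          rw [lintegral_const_mul' _ _ ENNReal.ofReal_ne_top, ← hnorm x,
            ← ENNReal.ofReal_mul (sq_nonneg C), mul_pow]
  rw [ENNReal.ofReal_le_ofReal_iff (sq_nonneg _)] at hsq
  exact le_of_sq_le_sq hsq (by positivity)

theorem stmt_9_general {G : Type*} [AddCommGroup G]
    {Gd : Type*} [MeasurableSpace Gd] (μ : Measure Gd)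
    (F : lp (fun _ : G => ℂ) 2 ≃ₗᵢ[ℂ] Lp ℂ 2 μ)
    {N : ℕ}
    (𝒜 : PiLp 2 (fun _ : Fin N => ell2 G) →L[ℂ] PiLp 2 (fun _ : Fin N => ell2 G))
    (Λ : Gd → Matrix (Fin N) (Fin N) ℂ)
    (hΛ : IsTransfer μ F 𝒜 Λ) :
    ‖𝒜‖ ≤ specNormR (Matrix.of fun m n => (eLpNorm (fun ξ => Λ ξ m n) ∞ μ).toReal) :=
  hΛ.opNorm_le_of_ae_norm_le <| ae_all_iff.mpr fun m => ae_all_iff.mpr fun n =>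
    (hΛ.1 m n).ae_norm_le_toReal_eLpNorm_top

/-- With `A_bnd = [‖â_{m,n}‖_{L^∞}]`, one has `‖𝒜‖ ≤ ‖A_bnd‖₂`. -/
theorem stmt_9 {G : Type*} [AddCommGroup G] [DecidableEq G]
    {Gd : Type*} [MeasurableSpace Gd] (μ : Measure Gd) [IsProbabilityMeasure μ]
    (e : AddChar G (Gd → ℂ)) (he : ∀ g ξ, ‖e g ξ‖ = 1)
    (F : lp (fun _ : G => ℂ) 2 ≃ₗᵢ[ℂ] Lp ℂ 2 μ)
    (hF : ∀ g : G, (F (lp.single 2 g 1) : Gd → ℂ) =ᵐ[μ] e (-g))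
    {N : ℕ}
    (𝒜 : PiLp 2 (fun _ : Fin N => ell2 G) →L[ℂ] PiLp 2 (fun _ : Fin N => ell2 G))
    (hlti : LTI 𝒜) (Λ : Gd → Matrix (Fin N) (Fin N) ℂ)
    (hΛ : IsTransfer μ F 𝒜 Λ) :
    ‖𝒜‖ ≤ specNormR (Matrix.of fun m n => (eLpNorm (fun ξ => Λ ξ m n) ∞ μ).toReal) :=
  stmt_9_general μ F 𝒜 Λ hΛ
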